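/- arXiv:2106.00657 — 2 statements merged into one kernel-verified Lean document; each statement's English description precedes it below -/
import Mathlib

section
/- If the E3C instance has a solution (q of the sets S_1, …, S_m cover U), then the gadget graph admits an edge-weighted clique decomposition consisting of exactly 6m + q cliques, each assigned weight 1. -/
open scoped Classical

/-- `edgeIn e D` says that both endpoints of the (potential) edge `e` lie in the
vertex set `D`, i.e. the clique with vertex set `D` contains the edge `e`. -/
def edgeIn {V : Type*} (e : Sym2 V) (D : Finset V) : Prop := ∀ x ∈ e, x ∈ D

/-- `IsEWCD G w k C wt` says that the finite set `C` of cliques of `G`, each clique `D ∈ C`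
carrying the positive rational weight `wt D`, is an edge-weighted clique decomposition of
size at most `k` of the graph `G` whose edge weights are given by `w`: for every edge `e`
of `G`, the weights of the cliques of `C` containing both endpoints of `e` sum to `w e`. -/
def IsEWCD {V : Type*} (G : SimpleGraph V) (w : Sym2 V → ℚ) (k : ℕ)
    (C : Finset (Finset V)) (wt : Finset V → ℚ) : Prop :=
  C.card ≤ k ∧
  (∀ D ∈ C, G.IsClique (D : Set V)) ∧
  (∀ D ∈ C, 0 < wt D) ∧
  (∀ e ∈ G.edgeSet, ∑ D ∈ C.filter (fun D => edgeIn e D), wt D = w e)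

/-- Vertex set of the gadget graph: element vertices `u` (coded `.inl (.inl u)`) and
`u'` (coded `.inl (.inr u)`) for each `u : U`, and triangle vertices
`a_i, b_i, c_i` (coded `.inr (i, 0/1/2)`) for each `i : Fin m`. -/
abbrev GVert (U : Type*) (m : ℕ) := (U ⊕ U) ⊕ (Fin m × Fin 3)

section Gadget

variable {U : Type*} {m : ℕ}

/-- The element vertex `u`. -/
def el (u : U) : GVert U m := Sum.inl (Sum.inl u)

/-- The element vertex `u'`. -/
def el' (u : U) : GVert U m := Sum.inl (Sum.inr u)

/-- The triangle vertex `a_i`. -/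
def va (i : Fin m) : GVert U m := Sum.inr (i, 0)

/-- The triangle vertex `b_i`. -/
def vb (i : Fin m) : GVert U m := Sum.inr (i, 1)

/-- The triangle vertex `c_i`. -/
def vc (i : Fin m) : GVert U m := Sum.inr (i, 2)

/-- The twelve gadget edges `E_i` for the set `S i = (u, v, w)`, namely
`a_ib_i, a_ic_i, b_ic_i, a_iu, b_iu, a_iu', a_iv, c_iv, c_iv', b_iw, c_iw, b_iw'`. -/
def Ei (S : Fin m → U × U × U) (i : Fin m) : Set (Sym2 (GVert U m)) :=
  {s(va i, vb i), s(va i, vc i), s(vb i, vc i),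
   s(va i, el (S i).1), s(vb i, el (S i).1), s(va i, el' (S i).1),
   s(va i, el (S i).2.1), s(vc i, el (S i).2.1), s(vc i, el' (S i).2.1),
   s(vb i, el (S i).2.2), s(vc i, el (S i).2.2), s(vb i, el' (S i).2.2)}

/-- All the edges of the gadget graph: an element-edge `uu'` for every `u : U`,
together with the twelve gadget edges of `E_i` for every `i : Fin m`. -/
def gadgetEdges (S : Fin m → U × U × U) : Set (Sym2 (GVert U m)) :=
  {e | ∃ u : U, e = s(el u, el' u)} ∪ {e | ∃ i : Fin m, e ∈ Ei S i}

/-- The gadget graph of the E3C instance `S`. -/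
def gadgetGraph (S : Fin m → U × U × U) : SimpleGraph (GVert U m) :=
  SimpleGraph.fromEdgeSet (gadgetEdges S)

/-- `S` lists genuine 3-element subsets: the three listed elements of each `S i`
are pairwise distinct. -/
def E3CInstance (S : Fin m → U × U × U) : Prop :=
  ∀ i : Fin m, (S i).1 ≠ (S i).2.1 ∧ (S i).1 ≠ (S i).2.2 ∧ (S i).2.1 ≠ (S i).2.2

/-- `T` is a solution of the E3C instance `S`: a choice of `q` of the sets
whose union is all of `U`. -/
def E3CSolution (q : ℕ) (S : Fin m → U × U × U) (T : Finset (Fin m)) : Prop :=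
  T.card = q ∧ ∀ x : U, ∃ i ∈ T, x = (S i).1 ∨ x = (S i).2.1 ∨ x = (S i).2.2

end Gadget

section Aux
variable {U : Type*} [DecidableEq U] {m : ℕ}

@[simp] lemma el_inj {u v : U} : (el u : GVert U m) = el v ↔ u = v := by simp [el]
@[simp] lemma el'_inj {u v : U} : (el' u : GVert U m) = el' v ↔ u = v := by simp [el']
@[simp] lemma el_ne_el' {u v : U} : (el u : GVert U m) ≠ el' v := by simp [el, el']
@[simp] lemma el'_ne_el {u v : U} : (el' u : GVert U m) ≠ el v := by simp [el, el']
@[simp] lemma va_inj {i j : Fin m} : (va i : GVert U m) = va j ↔ i = j := by simp [va]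
@[simp] lemma vb_inj {i j : Fin m} : (vb i : GVert U m) = vb j ↔ i = j := by simp [vb]
@[simp] lemma vc_inj {i j : Fin m} : (vc i : GVert U m) = vc j ↔ i = j := by simp [vc]
@[simp] lemma va_ne_vb {i j : Fin m} : (va i : GVert U m) ≠ vb j := by simp [va, vb]
@[simp] lemma vb_ne_va {i j : Fin m} : (vb i : GVert U m) ≠ va j := by simp [va, vb]
@[simp] lemma va_ne_vc {i j : Fin m} : (va i : GVert U m) ≠ vc j := by simp [va, vc]
@[simp] lemma vc_ne_va {i j : Fin m} : (vc i : GVert U m) ≠ va j := by simp [va, vc]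
@[simp] lemma vb_ne_vc {i j : Fin m} : (vb i : GVert U m) ≠ vc j := by simp [vb, vc]
@[simp] lemma vc_ne_vb {i j : Fin m} : (vc i : GVert U m) ≠ vb j := by simp [vb, vc]
@[simp] lemma el_ne_va {u : U} {i : Fin m} : (el u : GVert U m) ≠ va i := by simp [el, va]
@[simp] lemma el_ne_vb {u : U} {i : Fin m} : (el u : GVert U m) ≠ vb i := by simp [el, vb]
@[simp] lemma el_ne_vc {u : U} {i : Fin m} : (el u : GVert U m) ≠ vc i := by simp [el, vc]
@[simp] lemma el'_ne_va {u : U} {i : Fin m} : (el' u : GVert U m) ≠ va i := by simp [el', va]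
@[simp] lemma el'_ne_vb {u : U} {i : Fin m} : (el' u : GVert U m) ≠ vb i := by simp [el', vb]
@[simp] lemma el'_ne_vc {u : U} {i : Fin m} : (el' u : GVert U m) ≠ vc i := by simp [el', vc]
@[simp] lemma va_ne_el {u : U} {i : Fin m} : (va i : GVert U m) ≠ el u := by simp [el, va]
@[simp] lemma vb_ne_el {u : U} {i : Fin m} : (vb i : GVert U m) ≠ el u := by simp [el, vb]
@[simp] lemma vc_ne_el {u : U} {i : Fin m} : (vc i : GVert U m) ≠ el u := by simp [el, vc]
@[simp] lemma va_ne_el' {u : U} {i : Fin m} : (va i : GVert U m) ≠ el' u := by simp [el', va]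
@[simp] lemma vb_ne_el' {u : U} {i : Fin m} : (vb i : GVert U m) ≠ el' u := by simp [el', vb]
@[simp] lemma vc_ne_el' {u : U} {i : Fin m} : (vc i : GVert U m) ≠ el' u := by simp [el', vc]

/-- Cliques used for a selected triple `(u, v, w)` at gadget `i`. -/
def selK (i : Fin m) (u v w : U) : Finset (Finset (GVert U m)) :=
  {{va i, vb i, vc i},
   {va i, el u, el' u},
   {vc i, el v, el' v},
   {vb i, el w, el' w},
   {vb i, el u},
   {va i, el v},
   {vc i, el w}}

/-- Cliques used for an unselected triple `(u, v, w)` at gadget `i`. -/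
def unselK (i : Fin m) (u v w : U) : Finset (Finset (GVert U m)) :=
  {{va i, vb i, el u},
   {va i, vc i, el v},
   {vb i, vc i, el w},
   {va i, el' u},
   {vc i, el' v},
   {vb i, el' w}}

lemma finsetne {α : Type*} {A B : Finset α} (x : α) (h1 : x ∈ A) (h2 : x ∉ B) : A ≠ B :=
  fun h => h2 (h ▸ h1)

end Aux
section Aux2
set_option linter.unusedSectionVars false
variable {U : Type*} [DecidableEq U] {m : ℕ}

lemma card_selK (i : Fin m) {u v w : U} (huv : u ≠ v) (huw : u ≠ w) (hvw : v ≠ w) :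
    (selK i u v w).card = 7 := by
  rw [selK]
  rw [Finset.card_insert_of_notMem (by
    simp only [Finset.mem_insert, Finset.mem_singleton]
    push_neg
    exact ⟨finsetne (vb i) (by simp) (by simp), finsetne (vb i) (by simp) (by simp),
      finsetne (va i) (by simp) (by simp), finsetne (vc i) (by simp) (by simp),
      finsetne (vb i) (by simp) (by simp), finsetne (va i) (by simp) (by simp)⟩)]
  rw [Finset.card_insert_of_notMem (by
    simp only [Finset.mem_insert, Finset.mem_singleton]
    push_neg
    exact ⟨finsetne (va i) (by simp) (by simp), finsetne (va i) (by simp) (by simp),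
      finsetne (va i) (by simp) (by simp),
      finsetne (el u) (by simp) (by simp [huv]), finsetne (va i) (by simp) (by simp)⟩)]
  rw [Finset.card_insert_of_notMem (by
    simp only [Finset.mem_insert, Finset.mem_singleton]
    push_neg
    exact ⟨finsetne (vc i) (by simp) (by simp), finsetne (vc i) (by simp) (by simp),
      finsetne (vc i) (by simp) (by simp), finsetne (el v) (by simp) (by simp [hvw])⟩)]
  rw [Finset.card_insert_of_notMem (by
    simp only [Finset.mem_insert, Finset.mem_singleton]
    push_neg
    exact ⟨finsetne (el w) (by simp) (by simp [huw.symm]), finsetne (vb i) (by simp) (by simp),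
      finsetne (vb i) (by simp) (by simp)⟩)]
  rw [Finset.card_insert_of_notMem (by
    simp only [Finset.mem_insert, Finset.mem_singleton]
    push_neg
    exact ⟨finsetne (vb i) (by simp) (by simp), finsetne (vb i) (by simp) (by simp)⟩)]
  rw [Finset.card_insert_of_notMem (by
    simp only [Finset.mem_singleton]
    exact finsetne (va i) (by simp) (by simp))]
  simp

lemma card_unselK (i : Fin m) {u v w : U} (huv : u ≠ v) (huw : u ≠ w) (hvw : v ≠ w) :
    (unselK i u v w).card = 6 := by
  rw [unselK]
  rw [Finset.card_insert_of_notMem (by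
    simp only [Finset.mem_insert, Finset.mem_singleton]
    push_neg
    exact ⟨finsetne (vb i) (by simp) (by simp), finsetne (va i) (by simp) (by simp),
      finsetne (vb i) (by simp) (by simp), finsetne (vb i) (by simp) (by simp),
      finsetne (va i) (by simp) (by simp)⟩)]
  rw [Finset.card_insert_of_notMem (by
    simp only [Finset.mem_insert, Finset.mem_singleton]
    push_neg
    exact ⟨finsetne (va i) (by simp) (by simp), finsetne (vc i) (by simp) (by simp),
      finsetne (va i) (by simp) (by simp), finsetne (va i) (by simp) (by simp)⟩)]
  rw [Finset.card_insert_of_notMem (by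
    simp only [Finset.mem_insert, Finset.mem_singleton]
    push_neg
    exact ⟨finsetne (vc i) (by simp) (by simp), finsetne (vb i) (by simp) (by simp),
      finsetne (vc i) (by simp) (by simp)⟩)]
  rw [Finset.card_insert_of_notMem (by
    simp only [Finset.mem_insert, Finset.mem_singleton]
    push_neg
    exact ⟨finsetne (va i) (by simp) (by simp), finsetne (va i) (by simp) (by simp)⟩)]
  rw [Finset.card_insert_of_notMem (by
    simp only [Finset.mem_singleton]
    exact finsetne (vc i) (by simp) (by simp))]
  simp

lemma mem_inr_selK {i j : Fin m} {t : Fin 3} {u v w : U} {D : Finset (GVert U m)}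
    (hD : D ∈ selK i u v w) (hj : (Sum.inr (j, t) : GVert U m) ∈ D) : j = i := by
  simp only [selK, Finset.mem_insert, Finset.mem_singleton] at hD
  rcases hD with rfl|rfl|rfl|rfl|rfl|rfl|rfl <;>
    simp [va, vb, vc, el, el', Prod.ext_iff] at hj <;> tauto

lemma mem_inr_unselK {i j : Fin m} {t : Fin 3} {u v w : U} {D : Finset (GVert U m)}
    (hD : D ∈ unselK i u v w) (hj : (Sum.inr (j, t) : GVert U m) ∈ D) : j = i := by
  simp only [unselK, Finset.mem_insert, Finset.mem_singleton] at hD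
  rcases hD with rfl|rfl|rfl|rfl|rfl|rfl <;>
    simp [va, vb, vc, el, el', Prod.ext_iff] at hj <;> tauto

lemma exists_inr_selK {i : Fin m} {u v w : U} {D : Finset (GVert U m)}
    (hD : D ∈ selK i u v w) : ∃ t, (Sum.inr (i, t) : GVert U m) ∈ D := by
  simp only [selK, Finset.mem_insert, Finset.mem_singleton] at hD
  rcases hD with rfl|rfl|rfl|rfl|rfl|rfl|rfl
  · exact ⟨0, by simp [va]⟩
  · exact ⟨0, by simp [va]⟩
  · exact ⟨2, by simp [vc]⟩
  · exact ⟨1, by simp [vb]⟩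
  · exact ⟨1, by simp [vb]⟩
  · exact ⟨0, by simp [va]⟩
  · exact ⟨2, by simp [vc]⟩

lemma exists_inr_unselK {i : Fin m} {u v w : U} {D : Finset (GVert U m)}
    (hD : D ∈ unselK i u v w) : ∃ t, (Sum.inr (i, t) : GVert U m) ∈ D := by
  simp only [unselK, Finset.mem_insert, Finset.mem_singleton] at hD
  rcases hD with rfl|rfl|rfl|rfl|rfl|rfl
  · exact ⟨0, by simp [va]⟩
  · exact ⟨0, by simp [va]⟩
  · exact ⟨1, by simp [vb]⟩
  · exact ⟨0, by simp [va]⟩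
  · exact ⟨2, by simp [vc]⟩
  · exact ⟨1, by simp [vb]⟩

end Aux2
section Aux3
set_option linter.unusedSectionVars false
set_option maxHeartbeats 1000000
variable {U : Type*} [DecidableEq U] {m : ℕ}

/-- The family of cliques used at gadget `i`. -/
def famC (S : Fin m → U × U × U) (T : Finset (Fin m)) (i : Fin m) :
    Finset (Finset (GVert U m)) :=
  if i ∈ T then selK i (S i).1 (S i).2.1 (S i).2.2
  else unselK i (S i).1 (S i).2.1 (S i).2.2

lemma exists_inr_famC {S : Fin m → U × U × U} {T : Finset (Fin m)} {i : Fin m}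
    {D : Finset (GVert U m)} (hD : D ∈ famC S T i) :
    ∃ t, (Sum.inr (i, t) : GVert U m) ∈ D := by
  rw [famC] at hD; split_ifs at hD
  exacts [exists_inr_selK hD, exists_inr_unselK hD]

lemma mem_inr_famC {S : Fin m → U × U × U} {T : Finset (Fin m)} {i j : Fin m} {t : Fin 3}
    {D : Finset (GVert U m)} (hD : D ∈ famC S T i)
    (h : (Sum.inr (j, t) : GVert U m) ∈ D) : j = i := by
  rw [famC] at hD; split_ifs at hD
  exacts [mem_inr_selK hD h, mem_inr_unselK hD h]

lemma adj_gadget (S : Fin m → U × U × U) (i : Fin m) {x y : GVert U m}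
    (h : s(x, y) ∈ Ei S i) (hne : x ≠ y) : (gadgetGraph S).Adj x y := by
  rw [gadgetGraph, SimpleGraph.fromEdgeSet_adj]
  exact ⟨Or.inr ⟨i, h⟩, hne⟩

lemma adj_el (S : Fin m → U × U × U) (u : U) :
    (gadgetGraph S).Adj (el u) (el' u) := by
  rw [gadgetGraph, SimpleGraph.fromEdgeSet_adj]
  exact ⟨Or.inl ⟨u, rfl⟩, by simp⟩

lemma isCliqueTriple {V : Type*} [DecidableEq V] {G : SimpleGraph V} {p q r : V}
    (h1 : G.Adj p q) (h2 : G.Adj p r) (h3 : G.Adj q r) :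
    G.IsClique (↑({p, q, r} : Finset V)) := by
  simp only [Finset.coe_insert, Finset.coe_singleton]
  rw [SimpleGraph.isClique_insert]
  refine ⟨SimpleGraph.isClique_pair.2 fun _ => h3, ?_⟩
  intro b hb _
  rcases hb with rfl | hb
  · exact h1
  · rw [Set.mem_singleton_iff] at hb; subst hb; exact h2

lemma isCliquePair {V : Type*} [DecidableEq V] {G : SimpleGraph V} {p q : V} (h : G.Adj p q) :
    G.IsClique (↑({p, q} : Finset V)) := by
  simp only [Finset.coe_insert, Finset.coe_singleton]
  exact SimpleGraph.isClique_pair.2 fun _ => h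

lemma isClique_famC {S : Fin m → U × U × U} {T : Finset (Fin m)} {i : Fin m}
    {D : Finset (GVert U m)} (hD : D ∈ famC S T i) :
    (gadgetGraph S).IsClique (D : Set (GVert U m)) := by
  rw [famC] at hD
  split_ifs at hD <;>
    simp only [selK, unselK, Finset.mem_insert, Finset.mem_singleton] at hD
  · rcases hD with rfl | rfl | rfl | rfl | rfl | rfl | rfl
    · refine isCliqueTriple ?_ ?_ ?_ <;>
        first
          | exact adj_el S _
          | exact adj_gadget S i (by simp [Ei]) (by simp)
    · refine isCliqueTriple ?_ ?_ ?_ <;>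
        first
          | exact adj_el S _
          | exact adj_gadget S i (by simp [Ei]) (by simp)
    · refine isCliqueTriple ?_ ?_ ?_ <;>
        first
          | exact adj_el S _
          | exact adj_gadget S i (by simp [Ei]) (by simp)
    · refine isCliqueTriple ?_ ?_ ?_ <;>
        first
          | exact adj_el S _
          | exact adj_gadget S i (by simp [Ei]) (by simp)
    · exact isCliquePair (adj_gadget S i (by simp [Ei]) (by simp))
    · exact isCliquePair (adj_gadget S i (by simp [Ei]) (by simp))
    · exact isCliquePair (adj_gadget S i (by simp [Ei]) (by simp))
  · rcases hD with rfl | rfl | rfl | rfl | rfl | rfl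
    · refine isCliqueTriple ?_ ?_ ?_ <;>
        first
          | exact adj_el S _
          | exact adj_gadget S i (by simp [Ei]) (by simp)
    · refine isCliqueTriple ?_ ?_ ?_ <;>
        first
          | exact adj_el S _
          | exact adj_gadget S i (by simp [Ei]) (by simp)
    · refine isCliqueTriple ?_ ?_ ?_ <;>
        first
          | exact adj_el S _
          | exact adj_gadget S i (by simp [Ei]) (by simp)
    · exact isCliquePair (adj_gadget S i (by simp [Ei]) (by simp))
    · exact isCliquePair (adj_gadget S i (by simp [Ei]) (by simp))
    · exact isCliquePair (adj_gadget S i (by simp [Ei]) (by simp))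

lemma two_mem {S : Fin m → U × U × U} {T : Finset (Fin m)} {i : Fin m}
    {D : Finset (GVert U m)} {x y : GVert U m}
    (hD : D ∈ famC S T i) (hx : x ∈ D) (hy : y ∈ D) (hxy : x ≠ y) :
    (∃ t, x = (Sum.inr (i, t) : GVert U m)) ∨ (∃ t, y = (Sum.inr (i, t) : GVert U m)) ∨
      (i ∈ T ∧ ∃ u : U, (u = (S i).1 ∨ u = (S i).2.1 ∨ u = (S i).2.2) ∧
        ((x = el u ∧ y = el' u) ∨ (x = el' u ∧ y = el u))) := by
  rw [famC] at hD
  by_cases hiT : i ∈ T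
  · rw [if_pos hiT] at hD
    simp only [selK, Finset.mem_insert, Finset.mem_singleton] at hD
    rcases hD with rfl | rfl | rfl | rfl | rfl | rfl | rfl <;>
      simp only [Finset.mem_insert, Finset.mem_singleton] at hx hy <;>
      (first | (rcases hx with rfl | rfl | rfl) | (rcases hx with rfl | rfl)) <;>
      (first | (rcases hy with rfl | rfl | rfl) | (rcases hy with rfl | rfl)) <;>
      first
        | exact absurd rfl hxy
        | exact Or.inl ⟨_, rfl⟩
        | exact Or.inr (Or.inl ⟨_, rfl⟩)
        | exact Or.inr (Or.inr ⟨hiT, _, by tauto, Or.inl ⟨rfl, rfl⟩⟩)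
        | exact Or.inr (Or.inr ⟨hiT, _, by tauto, Or.inr ⟨rfl, rfl⟩⟩)
  · rw [if_neg hiT] at hD
    simp only [unselK, Finset.mem_insert, Finset.mem_singleton] at hD
    rcases hD with rfl | rfl | rfl | rfl | rfl | rfl <;>
      simp only [Finset.mem_insert, Finset.mem_singleton] at hx hy <;>
      (first | (rcases hx with rfl | rfl | rfl) | (rcases hx with rfl | rfl)) <;>
      (first | (rcases hy with rfl | rfl | rfl) | (rcases hy with rfl | rfl)) <;>
      first
        | exact absurd rfl hxy
        | exact Or.inl ⟨_, rfl⟩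
        | exact Or.inr (Or.inl ⟨_, rfl⟩)

lemma same_gadget {S : Fin m → U × U × U} {T : Finset (Fin m)} {i : Fin m}
    {D1 D2 : Finset (GVert U m)} {x y : GVert U m}
    (h1 : (S i).1 ≠ (S i).2.1) (h2 : (S i).1 ≠ (S i).2.2) (h3 : (S i).2.1 ≠ (S i).2.2)
    (hD1 : D1 ∈ famC S T i) (hD2 : D2 ∈ famC S T i) (hxy : x ≠ y)
    (hx1 : x ∈ D1) (hy1 : y ∈ D1) (hx2 : x ∈ D2) (hy2 : y ∈ D2) : D1 = D2 := by
  have h1' := h1.symm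
  have h2' := h2.symm
  have h3' := h3.symm
  rw [famC] at hD1 hD2
  split_ifs at hD1 hD2 <;>
    simp only [selK, unselK, Finset.mem_insert, Finset.mem_singleton] at hD1 hD2
  · rcases hD1 with rfl | rfl | rfl | rfl | rfl | rfl | rfl <;>
      rcases hD2 with rfl | rfl | rfl | rfl | rfl | rfl | rfl <;>
      first
        | rfl
        | (simp only [Finset.mem_insert, Finset.mem_singleton] at hx1 hy1 hx2 hy2
           (first | (rcases hx1 with rfl | rfl | rfl) | (rcases hx1 with rfl | rfl)) <;>
           (first | (rcases hy1 with rfl | rfl | rfl) | (rcases hy1 with rfl | rfl)) <;>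
             simp_all)
  · rcases hD1 with rfl | rfl | rfl | rfl | rfl | rfl <;>
      rcases hD2 with rfl | rfl | rfl | rfl | rfl | rfl <;>
      first
        | rfl
        | (simp only [Finset.mem_insert, Finset.mem_singleton] at hx1 hy1 hx2 hy2
           (first | (rcases hx1 with rfl | rfl | rfl) | (rcases hx1 with rfl | rfl)) <;>
           (first | (rcases hy1 with rfl | rfl | rfl) | (rcases hy1 with rfl | rfl)) <;>
             simp_all)

end Aux3
section Aux4
set_option linter.unusedSectionVars false
set_option maxHeartbeats 1000000
variable {U : Type*} [DecidableEq U] {m : ℕ}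

lemma exact_of_solution [Fintype U] {q : ℕ} (S : Fin m → U × U × U)
    (hU : Fintype.card U = 3 * q) {T : Finset (Fin m)} (hT : E3CSolution q S T) :
    ∀ x : U, ∀ i ∈ T, ∀ j ∈ T,
      (x = (S i).1 ∨ x = (S i).2.1 ∨ x = (S i).2.2) →
      (x = (S j).1 ∨ x = (S j).2.1 ∨ x = (S j).2.2) → i = j := by
  intro x i hi j hj hxi hxj
  by_contra hij
  set fU : Fin m → Finset U := fun k => {(S k).1, (S k).2.1, (S k).2.2} with hfU
  have hfU3 : ∀ k, (fU k).card ≤ 3 := by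
    intro k
    apply le_trans (Finset.card_insert_le _ _)
    have := Finset.card_insert_le (S k).2.1 ({(S k).2.2} : Finset U)
    simp only [Finset.card_singleton] at this
    omega
  have hcov : (Finset.univ : Finset U) ⊆ T.biUnion fU := by
    intro y _
    rcases hT.2 y with ⟨k, hk, hy⟩
    exact Finset.mem_biUnion.2 ⟨k, hk, by { simp only [hfU, Finset.mem_insert, Finset.mem_singleton]; tauto }⟩
  have hsub : T.biUnion fU ⊆ (fU i).erase x ∪ (T.erase i).biUnion fU := by
    intro y hy
    rcases Finset.mem_biUnion.1 hy with ⟨k, hk, hyk⟩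
    by_cases hki : k = i
    · subst hki
      by_cases hyx : y = x
      · subst hyx
        refine Finset.mem_union_right _ (Finset.mem_biUnion.2
          ⟨j, Finset.mem_erase.2 ⟨fun h => hij h.symm, hj⟩, ?_⟩)
        simp only [hfU, Finset.mem_insert, Finset.mem_singleton]
        tauto
      · exact Finset.mem_union_left _ (Finset.mem_erase.2 ⟨hyx, hyk⟩)
    · exact Finset.mem_union_right _ (Finset.mem_biUnion.2 ⟨k, Finset.mem_erase.2 ⟨hki, hk⟩, hyk⟩)
  have h1 : 3 * q ≤ (T.biUnion fU).card := by
    rw [← hU, ← Finset.card_univ]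
    exact Finset.card_le_card hcov
  have h2 : (T.biUnion fU).card ≤ ((fU i).erase x).card + ((T.erase i).biUnion fU).card :=
    le_trans (Finset.card_le_card hsub) (Finset.card_union_le _ _)
  have h3 : ((fU i).erase x).card ≤ 2 := by
    have hx : x ∈ fU i := by
      simp only [hfU, Finset.mem_insert, Finset.mem_singleton]
      tauto
    have := hfU3 i
    rw [Finset.card_erase_of_mem hx]
    omega
  have h4 : ((T.erase i).biUnion fU).card ≤ 3 * (q - 1) := by
    refine le_trans Finset.card_biUnion_le ?_
    calc ∑ k ∈ T.erase i, (fU k).card ≤ ∑ _k ∈ T.erase i, 3 :=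
          Finset.sum_le_sum fun k _ => hfU3 k
      _ = (T.erase i).card * 3 := by rw [Finset.sum_const, smul_eq_mul]
      _ = 3 * (q - 1) := by rw [Finset.card_erase_of_mem hi, hT.1, Nat.mul_comm]
  have hq : 1 ≤ q := by
    have h5 := Finset.card_pos.2 ⟨i, hi⟩
    have h6 := hT.1
    omega
  omega

lemma edgeIn_mk {x y : GVert U m} {D : Finset (GVert U m)} :
    edgeIn s(x, y) D ↔ x ∈ D ∧ y ∈ D := by
  constructor
  · exact fun h => ⟨h x (by simp), h y (by simp)⟩
  · rintro ⟨h1, h2⟩ z hz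
    rcases Sym2.mem_iff.1 hz with rfl | rfl <;> assumption

lemma exists_cover {S : Fin m → U × U × U} {T : Finset (Fin m)} {q : ℕ}
    (hT : E3CSolution q S T) :
    ∀ e ∈ gadgetEdges S, ∃ D, D ∈ Finset.univ.biUnion (famC S T) ∧ edgeIn e D := by
  intro e he
  rcases he with ⟨u, rfl⟩ | ⟨i, hei⟩
  · obtain ⟨i, hiT, hcov⟩ := hT.2 u
    rcases hcov with h | h | h
    · exact ⟨{va i, el (S i).1, el' (S i).1},
        Finset.mem_biUnion.2 ⟨i, Finset.mem_univ i, by simp [famC, hiT, selK]⟩,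
        edgeIn_mk.2 ⟨by simp [h], by simp [h]⟩⟩
    · exact ⟨{vc i, el (S i).2.1, el' (S i).2.1},
        Finset.mem_biUnion.2 ⟨i, Finset.mem_univ i, by simp [famC, hiT, selK]⟩,
        edgeIn_mk.2 ⟨by simp [h], by simp [h]⟩⟩
    · exact ⟨{vb i, el (S i).2.2, el' (S i).2.2},
        Finset.mem_biUnion.2 ⟨i, Finset.mem_univ i, by simp [famC, hiT, selK]⟩,
        edgeIn_mk.2 ⟨by simp [h], by simp [h]⟩⟩
  · simp only [Ei, Set.mem_insert_iff, Set.mem_singleton_iff] at hei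
    by_cases hiT : i ∈ T
    · rcases hei with rfl | rfl | rfl | rfl | rfl | rfl | rfl | rfl | rfl | rfl | rfl | rfl
      · exact ⟨{va i, vb i, vc i}, Finset.mem_biUnion.2 ⟨i, Finset.mem_univ i,
          by simp [famC, hiT, selK]⟩, edgeIn_mk.2 ⟨by simp, by simp⟩⟩
      · exact ⟨{va i, vb i, vc i}, Finset.mem_biUnion.2 ⟨i, Finset.mem_univ i,
          by simp [famC, hiT, selK]⟩, edgeIn_mk.2 ⟨by simp, by simp⟩⟩
      · exact ⟨{va i, vb i, vc i}, Finset.mem_biUnion.2 ⟨i, Finset.mem_univ i,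
          by simp [famC, hiT, selK]⟩, edgeIn_mk.2 ⟨by simp, by simp⟩⟩
      · exact ⟨{va i, el (S i).1, el' (S i).1}, Finset.mem_biUnion.2 ⟨i, Finset.mem_univ i,
          by simp [famC, hiT, selK]⟩, edgeIn_mk.2 ⟨by simp, by simp⟩⟩
      · exact ⟨{vb i, el (S i).1}, Finset.mem_biUnion.2 ⟨i, Finset.mem_univ i,
          by simp [famC, hiT, selK]⟩, edgeIn_mk.2 ⟨by simp, by simp⟩⟩
      · exact ⟨{va i, el (S i).1, el' (S i).1}, Finset.mem_biUnion.2 ⟨i, Finset.mem_univ i,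
          by simp [famC, hiT, selK]⟩, edgeIn_mk.2 ⟨by simp, by simp⟩⟩
      · exact ⟨{va i, el (S i).2.1}, Finset.mem_biUnion.2 ⟨i, Finset.mem_univ i,
          by simp [famC, hiT, selK]⟩, edgeIn_mk.2 ⟨by simp, by simp⟩⟩
      · exact ⟨{vc i, el (S i).2.1, el' (S i).2.1}, Finset.mem_biUnion.2 ⟨i, Finset.mem_univ i,
          by simp [famC, hiT, selK]⟩, edgeIn_mk.2 ⟨by simp, by simp⟩⟩
      · exact ⟨{vc i, el (S i).2.1, el' (S i).2.1}, Finset.mem_biUnion.2 ⟨i, Finset.mem_univ i,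
          by simp [famC, hiT, selK]⟩, edgeIn_mk.2 ⟨by simp, by simp⟩⟩
      · exact ⟨{vb i, el (S i).2.2, el' (S i).2.2}, Finset.mem_biUnion.2 ⟨i, Finset.mem_univ i,
          by simp [famC, hiT, selK]⟩, edgeIn_mk.2 ⟨by simp, by simp⟩⟩
      · exact ⟨{vc i, el (S i).2.2}, Finset.mem_biUnion.2 ⟨i, Finset.mem_univ i,
          by simp [famC, hiT, selK]⟩, edgeIn_mk.2 ⟨by simp, by simp⟩⟩
      · exact ⟨{vb i, el (S i).2.2, el' (S i).2.2}, Finset.mem_biUnion.2 ⟨i, Finset.mem_univ i,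
          by simp [famC, hiT, selK]⟩, edgeIn_mk.2 ⟨by simp, by simp⟩⟩
    · rcases hei with rfl | rfl | rfl | rfl | rfl | rfl | rfl | rfl | rfl | rfl | rfl | rfl
      · exact ⟨{va i, vb i, el (S i).1}, Finset.mem_biUnion.2 ⟨i, Finset.mem_univ i,
          by simp [famC, hiT, unselK]⟩, edgeIn_mk.2 ⟨by simp, by simp⟩⟩
      · exact ⟨{va i, vc i, el (S i).2.1}, Finset.mem_biUnion.2 ⟨i, Finset.mem_univ i,
          by simp [famC, hiT, unselK]⟩, edgeIn_mk.2 ⟨by simp, by simp⟩⟩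
      · exact ⟨{vb i, vc i, el (S i).2.2}, Finset.mem_biUnion.2 ⟨i, Finset.mem_univ i,
          by simp [famC, hiT, unselK]⟩, edgeIn_mk.2 ⟨by simp, by simp⟩⟩
      · exact ⟨{va i, vb i, el (S i).1}, Finset.mem_biUnion.2 ⟨i, Finset.mem_univ i,
          by simp [famC, hiT, unselK]⟩, edgeIn_mk.2 ⟨by simp, by simp⟩⟩
      · exact ⟨{va i, vb i, el (S i).1}, Finset.mem_biUnion.2 ⟨i, Finset.mem_univ i,
          by simp [famC, hiT, unselK]⟩, edgeIn_mk.2 ⟨by simp, by simp⟩⟩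
      · exact ⟨{va i, el' (S i).1}, Finset.mem_biUnion.2 ⟨i, Finset.mem_univ i,
          by simp [famC, hiT, unselK]⟩, edgeIn_mk.2 ⟨by simp, by simp⟩⟩
      · exact ⟨{va i, vc i, el (S i).2.1}, Finset.mem_biUnion.2 ⟨i, Finset.mem_univ i,
          by simp [famC, hiT, unselK]⟩, edgeIn_mk.2 ⟨by simp, by simp⟩⟩
      · exact ⟨{va i, vc i, el (S i).2.1}, Finset.mem_biUnion.2 ⟨i, Finset.mem_univ i,
          by simp [famC, hiT, unselK]⟩, edgeIn_mk.2 ⟨by simp, by simp⟩⟩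
      · exact ⟨{vc i, el' (S i).2.1}, Finset.mem_biUnion.2 ⟨i, Finset.mem_univ i,
          by simp [famC, hiT, unselK]⟩, edgeIn_mk.2 ⟨by simp, by simp⟩⟩
      · exact ⟨{vb i, vc i, el (S i).2.2}, Finset.mem_biUnion.2 ⟨i, Finset.mem_univ i,
          by simp [famC, hiT, unselK]⟩, edgeIn_mk.2 ⟨by simp, by simp⟩⟩
      · exact ⟨{vb i, vc i, el (S i).2.2}, Finset.mem_biUnion.2 ⟨i, Finset.mem_univ i,
          by simp [famC, hiT, unselK]⟩, edgeIn_mk.2 ⟨by simp, by simp⟩⟩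
      · exact ⟨{vb i, el' (S i).2.2}, Finset.mem_biUnion.2 ⟨i, Finset.mem_univ i,
          by simp [famC, hiT, unselK]⟩, edgeIn_mk.2 ⟨by simp, by simp⟩⟩

end Aux4

set_option maxHeartbeats 1000000

/-- If the E3C instance has a solution (`q` of the sets `S_1, …, S_m` cover `U`), then the
gadget graph admits an edge-weighted clique decomposition consisting of exactly `6m + q`
cliques, each assigned weight `1`. -/
theorem stmt_4 {U : Type*} [Fintype U] [DecidableEq U] {m q : ℕ}
    (S : Fin m → U × U × U) (hS : E3CInstance S) (hU : Fintype.card U = 3 * q)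
    (hsol : ∃ T : Finset (Fin m), E3CSolution q S T) :
    ∃ C : Finset (Finset (GVert U m)),
      IsEWCD (gadgetGraph S) (fun _ => 1) (6 * m + q) C (fun _ => 1) ∧
        C.card = 6 * m + q := by
  obtain ⟨T, hT⟩ := hsol
  have hexact := exact_of_solution S hU hT
  set C : Finset (Finset (GVert U m)) := Finset.univ.biUnion (famC S T) with hCdef
  have hdisj : ∀ i ∈ (Finset.univ : Finset (Fin m)), ∀ j ∈ Finset.univ, i ≠ j →
      Disjoint (famC S T i) (famC S T j) := by
    intro i _ j _ hij
    rw [Finset.disjoint_left]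
    intro D hDi hDj
    obtain ⟨t, ht⟩ := exists_inr_famC hDi
    exact hij (mem_inr_famC hDj ht)
  have hcard : C.card = 6 * m + q := by
    rw [hCdef, Finset.card_biUnion hdisj]
    have e1 : ∀ i ∈ (Finset.univ : Finset (Fin m)),
        (famC S T i).card = 6 + (if i ∈ T then 1 else 0) := by
      intro i _
      rw [famC]
      rcases (hS i) with ⟨d1, d2, d3⟩
      split_ifs with h
      · rw [card_selK i d1 d2 d3]
      · rw [card_unselK i d1 d2 d3]
    rw [Finset.sum_congr rfl e1, Finset.sum_add_distrib, Finset.sum_const,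
      Finset.sum_ite_mem, Finset.univ_inter, Finset.sum_const, hT.1]
    simp only [smul_eq_mul, Finset.card_univ, Fintype.card_fin, mul_one]
    omega
  have key : ∀ D1 ∈ C, ∀ D2 ∈ C, ∀ x y : GVert U m, x ≠ y →
      x ∈ D1 → y ∈ D1 → x ∈ D2 → y ∈ D2 → D1 = D2 := by
    intro D1 hD1 D2 hD2 x y hxy hx1 hy1 hx2 hy2
    rcases Finset.mem_biUnion.1 hD1 with ⟨i, _, hDi⟩
    rcases Finset.mem_biUnion.1 hD2 with ⟨j, _, hDj⟩
    by_cases hij : i = j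
    · subst hij
      exact same_gadget (hS i).1 (hS i).2.1 (hS i).2.2 hDi hDj hxy hx1 hy1 hx2 hy2
    · exfalso
      rcases two_mem hDi hx1 hy1 hxy with ⟨t, rfl⟩ | ⟨t, rfl⟩ | ⟨hiT, u, hcov, hpair⟩
      · exact hij (mem_inr_famC hDj hx2)
      · exact hij (mem_inr_famC hDj hy2)
      · rcases two_mem hDj hx2 hy2 hxy with ⟨t, rfl⟩ | ⟨t, rfl⟩ | ⟨hjT, u2, hcov2, hpair2⟩
        · simp [el, el'] at hpair
        · simp [el, el'] at hpair
        · have huu : u = u2 := by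
            rcases hpair with ⟨ha, hb⟩ | ⟨ha, hb⟩ <;>
              rcases hpair2 with ⟨hc, hd⟩ | ⟨hc, hd⟩ <;>
              rw [ha] at hc <;> simp at hc <;> exact hc
          subst huu
          exact hij (hexact u i hiT j hjT
            (by tauto) (by tauto))
  refine ⟨C, ⟨hcard.le, ?_, fun D _ => one_pos, ?_⟩, hcard⟩
  · intro D hD
    rcases Finset.mem_biUnion.1 hD with ⟨i, _, hDi⟩
    exact isClique_famC hDi
  · intro e he
    induction e using Sym2.ind with
    | _ x y =>
      rw [gadgetGraph, SimpleGraph.edgeSet_fromEdgeSet, Set.mem_diff] at he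
      obtain ⟨heE, hnd⟩ := he
      have hne : x ≠ y := fun h => hnd (by simp [Sym2.mk_isDiag_iff, h])
      obtain ⟨D0, hD0C, hD0in⟩ := exists_cover hT _ heE
      obtain ⟨hx1, hy1⟩ := edgeIn_mk.1 hD0in
      have hfilter : C.filter (fun D => edgeIn s(x, y) D) = {D0} := by
        apply Finset.eq_singleton_iff_unique_mem.2
        refine ⟨Finset.mem_filter.2 ⟨hD0C, hD0in⟩, ?_⟩
        intro D hD
        obtain ⟨hDC, hDin⟩ := Finset.mem_filter.1 hD
        obtain ⟨hx0, hy0⟩ := edgeIn_mk.1 hDin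
        exact key D hDC D0 hD0C x y hne hx0 hy0 hx1 hy1
      rw [hfilter]
      simp
end

section
/- Let C be an edge-weighted clique decomposition of the gadget graph and let S_i = (u, v, w). If the clique {w, w', b_i} belongs to C (with its positive weight), then the total weight assigned in C to the clique {b_i, c_i, w} is strictly less than 1, and hence the two-vertex clique {c_i, w} must belong to C. -/
open scoped Classical

section Aux

variable {U : Type*} {m : ℕ}

theorem edgeIn_pair {V : Type*} (a b : V) (D : Finset V) :
    edgeIn s(a, b) D ↔ a ∈ D ∧ b ∈ D := by
  constructor
  · intro h; exact ⟨h a (by simp), h b (by simp)⟩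
  · rintro ⟨ha, hb⟩ x hx
    rw [Sym2.mem_iff] at hx
    rcases hx with rfl | rfl <;> assumption

theorem common_nbr (S : Fin m → U × U × U) (hS : E3CInstance S) (i : Fin m) (u v w : U)
    (hSi : S i = (u, v, w)) (x : GVert U m)
    (h1 : (gadgetGraph S).Adj x (vc i)) (h2 : (gadgetGraph S).Adj x (el w)) : x = vb i := by
  rw [gadgetGraph, SimpleGraph.fromEdgeSet_adj] at h1 h2
  obtain ⟨h1e, h1ne⟩ := h1
  obtain ⟨h2e, h2ne⟩ := h2
  simp only [gadgetEdges, Ei, Set.mem_union, Set.mem_setOf_eq, Set.mem_insert_iff,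
    Set.mem_singleton_iff, Sym2.eq_iff, el, el', va, vb, vc] at h1e h2e
  simp at h1e h2e
  obtain ⟨hu, hv, hw⟩ := hS i
  rw [hSi] at hu hv hw; simp at hu hv hw
  obtain ⟨j, hj⟩ := h1e
  rcases hj with ⟨hx, rfl⟩ | ⟨hx, rfl⟩ | ⟨hx, rfl⟩ | ⟨hx, rfl⟩ | ⟨hx, rfl⟩ <;> subst hx
  · exfalso
    rcases h2e with h | ⟨j', h⟩ <;> simp at h
    rcases h with ⟨rfl, h⟩ | ⟨rfl, h⟩ <;> rw [hSi] at h
    exacts [hv h.symm, hw h.symm]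
  · rfl
  · exfalso
    rcases h2e with h | ⟨j', h⟩ <;> simp at h
  · exfalso
    rcases h2e with h | ⟨j', h⟩ <;> simp at h
    rw [hSi] at h; exact hw h
  · exact absurd (by simp [el, hSi]) h2ne

theorem edge_bw (S : Fin m → U × U × U) (i : Fin m) (u v w : U) (hSi : S i = (u, v, w)) :
    s(vb i, el w) ∈ (gadgetGraph S).edgeSet := by
  rw [gadgetGraph, SimpleGraph.edgeSet_fromEdgeSet]
  refine ⟨Or.inr ⟨i, ?_⟩, by simp [vb, el]⟩
  simp [Ei, hSi]

theorem edge_cw (S : Fin m → U × U × U) (i : Fin m) (u v w : U) (hSi : S i = (u, v, w)) :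
    s(vc i, el w) ∈ (gadgetGraph S).edgeSet := by
  rw [gadgetGraph, SimpleGraph.edgeSet_fromEdgeSet]
  refine ⟨Or.inr ⟨i, ?_⟩, by simp [vc, el]⟩
  simp [Ei, hSi]

end Aux


/-- Let `C` be an edge-weighted clique decomposition of the gadget graph and let
`S i = (u, v, w)`. If the clique `{w, w', b_i}` belongs to `C` (with its positive weight),
then the total weight assigned in `C` to the clique `{b_i, c_i, w}` is strictly less
than `1`, and hence the two-vertex clique `{c_i, w}` must belong to `C`. -/
theorem stmt_8 {U : Type*} [DecidableEq U] {m : ℕ} (S : Fin m → U × U × U)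
    (hS : E3CInstance S) (i : Fin m) (u v w : U) (hSi : S i = (u, v, w))
    (k : ℕ) (C : Finset (Finset (GVert U m))) (wt : Finset (GVert U m) → ℚ)
    (hC : IsEWCD (gadgetGraph S) (fun _ => 1) k C wt)
    (hmem : ({el w, el' w, vb i} : Finset (GVert U m)) ∈ C) :
    (∑ D ∈ C.filter (fun D => D = ({vb i, vc i, el w} : Finset (GVert U m))), wt D) < 1 ∧
      ({vc i, el w} : Finset (GVert U m)) ∈ C := by
  obtain ⟨hcard, hclq, hpos, hsum⟩ := hC
  have hne_bc : (vb i : GVert U m) ≠ vc i := by simp [vb, vc]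
  have hne_bw : (vb i : GVert U m) ≠ el w := by simp [vb, el]
  have hne_cw : (vc i : GVert U m) ≠ el w := by simp [vc, el]
  set Δ : Finset (GVert U m) := {vb i, vc i, el w} with hΔ
  set T0 : Finset (GVert U m) := {el w, el' w, vb i} with hT0
  have h1 := hsum s(vb i, el w) (edge_bw S i u v w hSi)
  simp only at h1
  have hsub : C.filter (fun D => D = Δ) ⊆ C.filter (fun D => edgeIn s(vb i, el w) D) := by
    intro D hD
    rw [Finset.mem_filter] at hD ⊢
    refine ⟨hD.1, ?_⟩
    rw [hD.2, edgeIn_pair]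
    simp [hΔ]
  have hT0in : T0 ∈ C.filter (fun D => edgeIn s(vb i, el w) D) := by
    rw [Finset.mem_filter]
    refine ⟨hmem, ?_⟩
    rw [edgeIn_pair]
    simp [hT0]
  have hT0notin : T0 ∉ C.filter (fun D => D = Δ) := by
    rw [Finset.mem_filter]
    rintro ⟨-, hEq⟩
    have : (el' w : GVert U m) ∈ Δ := by rw [← hEq]; simp [hT0]
    simp [hΔ, el, el', vb, vc] at this
  have part1 : (∑ D ∈ C.filter (fun D => D = Δ), wt D) < 1 := by
    calc (∑ D ∈ C.filter (fun D => D = Δ), wt D)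
        < ∑ D ∈ C.filter (fun D => edgeIn s(vb i, el w) D), wt D := by
          refine Finset.sum_lt_sum_of_subset hsub hT0in hT0notin (hpos T0 hmem) ?_
          intro j hj _
          exact (hpos j (Finset.mem_filter.mp hj).1).le
      _ = 1 := h1
  refine ⟨part1, ?_⟩
  by_contra hc2
  have h2 := hsum s(vc i, el w) (edge_cw S i u v w hSi)
  simp only at h2
  have hfilter : C.filter (fun D => edgeIn s(vc i, el w) D) = C.filter (fun D => D = Δ) := by
    ext D
    rw [Finset.mem_filter, Finset.mem_filter]
    constructor
    · rintro ⟨hD, hin⟩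
      rw [edgeIn_pair] at hin
      obtain ⟨hvcD, hewD⟩ := hin
      refine ⟨hD, ?_⟩
      have hsubΔ : D ⊆ Δ := by
        intro x hx
        by_cases hxc : x = vc i
        · simp [hΔ, hxc]
        by_cases hxw : x = el w
        · simp [hΔ, hxw]
        have hadj1 : (gadgetGraph S).Adj x (vc i) :=
          hclq D hD (Finset.mem_coe.mpr hx) (Finset.mem_coe.mpr hvcD) hxc
        have hadj2 : (gadgetGraph S).Adj x (el w) :=
          hclq D hD (Finset.mem_coe.mpr hx) (Finset.mem_coe.mpr hewD) hxw
        have := common_nbr S hS i u v w hSi x hadj1 hadj2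
        simp [hΔ, this]
      by_cases hvbD : vb i ∈ D
      · apply Finset.Subset.antisymm hsubΔ
        intro x hx
        simp only [hΔ, Finset.mem_insert, Finset.mem_singleton] at hx
        rcases hx with rfl | rfl | rfl <;> assumption
      · exfalso
        apply hc2
        have : D = ({vc i, el w} : Finset (GVert U m)) := by
          apply Finset.Subset.antisymm
          · intro x hx
            have := hsubΔ hx
            simp only [hΔ, Finset.mem_insert, Finset.mem_singleton] at this
            rcases this with rfl | rfl | rfl
            · exact absurd hx hvbD
            · simp
            · simp
          · intro x hx
            simp only [Finset.mem_insert, Finset.mem_singleton] at hx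
            rcases hx with rfl | rfl <;> assumption
        rw [← this]; exact hD
    · rintro ⟨hD, rfl⟩
      refine ⟨hD, ?_⟩
      rw [edgeIn_pair]
      simp [hΔ]
  rw [hfilter] at h2
  rw [h2] at part1
  exact lt_irrefl 1 part1
end
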